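/- Let A be an n×n row-stochastic real matrix (nonnegative entries, each row summing to 1), s ∈ ℝⁿ, and let z* = (2I − A)⁻¹ s be the Friedkin–Johnsen equilibrium. Assume the entries of z* sum to zero. Then the sum of polarization and disagreement at equilibrium satisfies P(z*) + D(z*, A) = sᵀ (2I − Aᵀ)⁻¹ s + (1/2) sᵀ (2I − Aᵀ)⁻¹ (D_in − I) (2I − A)⁻¹ s, where D_in is the diagonal matrix of column sums of A. -/
import Mathlib


open Matrix

lemma matrix_two_apply {n : ℕ} (i j : Fin n) :
    (2 : Matrix (Fin n) (Fin n) ℝ) i j = if i = j then 2 else 0 := by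
  have h : (2 : Matrix (Fin n) (Fin n) ℝ) = 1 + 1 := by norm_num
  rw [h]
  simp [Matrix.one_apply]
  split <;> norm_num

lemma matrix_transpose_two {n : ℕ} :
    (2 : Matrix (Fin n) (Fin n) ℝ)ᵀ = 2 := by
  have h : (2 : Matrix (Fin n) (Fin n) ℝ) = 1 + 1 := by norm_num
  rw [h, Matrix.transpose_add, Matrix.transpose_one]

/-- For a row-stochastic `A`, `s ∈ ℝⁿ`, and the Friedkin–Johnsen
equilibrium `z* = (2I - A)⁻¹ s`, if the entries of `z*` sum to zero, then
`P(z*) + D(z*, A) = sᵀ (2I - Aᵀ)⁻¹ s + (1/2) sᵀ (2I - Aᵀ)⁻¹ (D_in - I) (2I - A)⁻¹ s`,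
where `D_in` is the diagonal matrix of column sums of `A`. -/
theorem stmt_6 {n : ℕ} (A : Matrix (Fin n) (Fin n) ℝ)
    (hpos : ∀ i j, 0 ≤ A i j) (hrow : ∀ i, ∑ j, A i j = 1)
    (s : Fin n → ℝ)
    (z : Fin n → ℝ) (hz : z = (2 - A)⁻¹ *ᵥ s)
    (hmean : ∑ i, z i = 0) :
    (∑ i, (z i - (∑ j, z j) / n) ^ 2)
      + (1 / 2) * ∑ i, ∑ j, A i j * (z i - z j) ^ 2
    = s ⬝ᵥ ((2 - Aᵀ)⁻¹ *ᵥ s)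
      + (1 / 2) * (s ⬝ᵥ ((2 - Aᵀ)⁻¹ *ᵥ
          ((Matrix.diagonal (fun j => ∑ i, A i j) - 1) *ᵥ ((2 - A)⁻¹ *ᵥ s)))) := by
  -- invertibility of 2 - A
  have hB : IsUnit (2 - A).det := by
    refine Ne.isUnit (det_ne_zero_of_sum_row_lt_diag fun k => ?_)
    have hAkk : A k k ≤ 1 := by
      rw [← hrow k]
      exact Finset.single_le_sum (fun j _ => hpos k j) (Finset.mem_univ k)
    have h1 : ∑ j ∈ Finset.univ.erase k, ‖(2 - A) k j‖ = 1 - A k k := by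
      have he : ∀ j ∈ Finset.univ.erase k, ‖(2 - A) k j‖ = A k j := by
        intro j hj
        rcases Finset.mem_erase.mp hj with ⟨hne, -⟩
        rw [Matrix.sub_apply, matrix_two_apply, if_neg (Ne.symm hne), zero_sub,
          Real.norm_eq_abs, abs_neg, abs_of_nonneg (hpos k j)]
      rw [Finset.sum_congr rfl he, Finset.sum_erase_eq_sub (Finset.mem_univ k), hrow k]
    have h2 : ‖(2 - A) k k‖ = 2 - A k k := by
      rw [Matrix.sub_apply, matrix_two_apply, if_pos rfl, Real.norm_eq_abs,
        abs_of_nonneg (by linarith)]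
    rw [h1, h2]; linarith
  have hs : (2 - A) *ᵥ z = s := by
    rw [hz, Matrix.mulVec_mulVec, Matrix.mul_nonsing_inv _ hB, Matrix.one_mulVec]
  have htr : (2 - Aᵀ) = (2 - A)ᵀ := by
    rw [Matrix.transpose_sub, matrix_transpose_two]
  have htinv : (2 - Aᵀ)⁻¹ = ((2 - A)⁻¹)ᵀ := by
    rw [htr, Matrix.transpose_nonsing_inv]
  rw [htinv, Matrix.dotProduct_mulVec, Matrix.dotProduct_mulVec,
    Matrix.vecMul_transpose, ← hz, ← hs, hmean]
  set c : Fin n → ℝ := fun j => ∑ i, A i j with hc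
  set T := ∑ i, z i ^ 2 with hT
  set Q := ∑ i, z i * ∑ j, A i j * z j with hQ
  set C := ∑ j, c j * z j ^ 2 with hC
  have hl : ∑ i, ∑ j, A i j * (z i - z j) ^ 2 = T + C - 2 * Q := by
    have e : ∀ i, ∑ j, A i j * (z i - z j) ^ 2
        = z i ^ 2 + (∑ j, A i j * z j ^ 2) - 2 * (z i * ∑ j, A i j * z j) := by
      intro i
      have h1 : z i ^ 2 = ∑ j, A i j * z i ^ 2 := by
        rw [← Finset.sum_mul, hrow i, one_mul]
      rw [h1, Finset.mul_sum, Finset.mul_sum, ← Finset.sum_add_distrib,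
        ← Finset.sum_sub_distrib]
      exact Finset.sum_congr rfl fun j _ => by ring
    rw [Finset.sum_congr rfl fun i _ => e i, Finset.sum_sub_distrib, Finset.sum_add_distrib,
      ← Finset.mul_sum, ← hQ, ← hT]
    congr 2
    rw [Finset.sum_comm]
    exact Finset.sum_congr rfl fun j _ => by rw [← Finset.sum_mul]
  have hr1 : z ⬝ᵥ ((2 - A) *ᵥ z) = 2 * T - Q := by
    simp only [dotProduct, Matrix.mulVec, Matrix.sub_apply, matrix_two_apply,
      sub_mul, ite_mul, zero_mul, Finset.sum_sub_distrib, Finset.sum_ite_eq,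
      Finset.mem_univ, if_true, mul_sub]
    rw [hQ, hT, Finset.mul_sum]
    congr 1
    exact Finset.sum_congr rfl fun i _ => by ring
  have hr2 : z ⬝ᵥ ((Matrix.diagonal c - 1) *ᵥ z) = C - T := by
    simp only [dotProduct, Matrix.mulVec, Matrix.sub_apply, Matrix.diagonal_apply,
      Matrix.one_apply, sub_mul, ite_mul, zero_mul, Finset.sum_sub_distrib,
      Finset.sum_ite_eq, Finset.mem_univ, if_true, mul_sub]
    rw [hC, hT]
    congr 1
    · exact Finset.sum_congr rfl fun i _ => by ring
    · exact Finset.sum_congr rfl fun i _ => by ring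
  rw [hl, hr1, hr2]
  simp only [zero_div, sub_zero, ← hT]
  ring
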